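/- Let A = {A_i}_{i=1}^{N_A} and B = {B_j}_{j=1}^{N_B} be POVMs on the Hilbert space ℂ^N and let ρ be a density operator on ℂ^N. For any two entropic functional pairs (h_A,φ_A) and (h_B,φ_B), one has the explicit (generally weaker) lower bound H_{(h_A,φ_A)}(p(A,ρ)) + H_{(h_B,φ_B)}(p(B,ρ)) ≥ D_{(h_A,φ_A)}(γ_A) + D_{(h_B,φ_B)}(γ_B), valid whatever the overlap triplet is (in particular even when γ_{A,B} > γ_A + γ_B). -/

import Mathlib

open scoped BigOperators ComplexOrder

noncomputable section

/-- An entropic functional pair `(h, φ)` in the sense of Salicrú: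
`φ : [0,1] → ℝ` is continuous and strictly concave (resp. strictly convex) with `φ 0 = 0`,
and `h : ℝ → ℝ` is continuous and strictly increasing (resp. strictly decreasing)
with `h (φ 1) = 0`. -/
structure EntropicPair where
  phi : ℝ → ℝ
  h : ℝ → ℝ
  phi_cont : ContinuousOn phi (Set.Icc 0 1)
  h_cont : Continuous h
  phi_zero : phi 0 = 0
  norm_zero : h (phi 1) = 0
  admissible : (StrictConcaveOn ℝ (Set.Icc (0:ℝ) 1) phi ∧ StrictMono h) ∨
               (StrictConvexOn ℝ (Set.Icc (0:ℝ) 1) phi ∧ StrictAnti h)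

/-- `p` is a probability vector. -/
def IsProbVec {ι : Type*} [Fintype ι] (p : ι → ℝ) : Prop :=
  (∀ k, 0 ≤ p k) ∧ ∑ k, p k = 1

/-- The Salicrú `(h,φ)`-entropy of a probability vector. -/
noncomputable def EntropicPair.H (e : EntropicPair) {ι : Type*} [Fintype ι] (p : ι → ℝ) : ℝ :=
  e.h (∑ k, e.phi (p k))

/-- The minimal `(h,φ)`-entropy among probability vectors with maximal component `P`. -/
noncomputable def EntropicPair.Hmin (e : EntropicPair) (P : ℝ) : ℝ :=
  e.h ((⌊1 / P⌋₊ : ℝ) * e.phi P + e.phi (1 - (⌊1 / P⌋₊ : ℝ) * P))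

/-- `D_{(h,φ)}(θ) = h(⌊1/cos²θ⌋ φ(cos²θ) + φ(1 − ⌊1/cos²θ⌋ cos²θ))`. -/
noncomputable def EntropicPair.D (e : EntropicPair) (θ : ℝ) : ℝ :=
  e.Hmin (Real.cos θ ^ 2)

/-- A POVM: a finite family of positive semidefinite matrices summing to the identity. -/
def IsPOVM {N M : ℕ} (A : Fin M → Matrix (Fin N) (Fin N) ℂ) : Prop :=
  (∀ i, (A i).PosSemidef) ∧ ∑ i, A i = 1

/-- A density operator: positive semidefinite with unit trace. -/
def IsDensityOp {N : ℕ} (ρ : Matrix (Fin N) (Fin N) ℂ) : Prop :=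
  ρ.PosSemidef ∧ ρ.trace = 1

/-- The operator (spectral) norm of a matrix, acting on Euclidean space. -/
noncomputable def opNorm {N : ℕ} (M : Matrix (Fin N) (Fin N) ℂ) : ℝ :=
  ‖(Matrix.toEuclideanCLM (𝕜 := ℂ) M : EuclideanSpace ℂ (Fin N) →L[ℂ] EuclideanSpace ℂ (Fin N))‖

/-- The positive semidefinite square root (junk value `0` on non-PSD matrices). -/
noncomputable def psdSqrt {N : ℕ} (M : Matrix (Fin N) (Fin N) ℂ) : Matrix (Fin N) (Fin N) ℂ :=
  open scoped Classical in
  if h : M.PosSemidef then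
    (h.1.eigenvectorUnitary : Matrix (Fin N) (Fin N) ℂ) *
      Matrix.diagonal (((↑) : ℝ → ℂ) ∘ Real.sqrt ∘ h.1.eigenvalues) *
      (star h.1.eigenvectorUnitary : Matrix (Fin N) (Fin N) ℂ)
  else 0

/-- Outcome probabilities `p_i(A,ρ) = Tr (A_i ρ)`. -/
noncomputable def probVec {N M : ℕ} (A : Fin M → Matrix (Fin N) (Fin N) ℂ)
    (ρ : Matrix (Fin N) (Fin N) ℂ) : Fin M → ℝ :=
  fun i => ((A i * ρ).trace).re

/-- Overlap `c_A = max_i ‖√A_i‖`. -/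
noncomputable def covA {N M : ℕ} (A : Fin M → Matrix (Fin N) (Fin N) ℂ) : ℝ :=
  ⨆ i, opNorm (psdSqrt (A i))

/-- Overlap `c_{A,B} = max_{i,j} ‖√A_i √B_j‖`. -/
noncomputable def covAB {N Ma Mb : ℕ} (A : Fin Ma → Matrix (Fin N) (Fin N) ℂ)
    (B : Fin Mb → Matrix (Fin N) (Fin N) ℂ) : ℝ :=
  ⨆ i, ⨆ j, opNorm (psdSqrt (A i) * psdSqrt (B j))

/-! Each outcome probability satisfies `p_i = Tr (A_i ρ) ≤ ‖A_i‖ = ‖√A_i‖² ≤ c_A² = cos² γ_A`.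
Among probability vectors with entries at most `P`, the sum `∑ φ (p k)` of a concave `φ` with
`φ 0 = 0` is smallest at the greedy vector (`⌊1/P⌋` entries `P` and one remainder entry): adding
an entry `x ≤ P` to the greedy packing of a mass `s` either tops up the remainder or completes a
part and starts a new one, and in both cases a chord comparison for `φ` bounds the increase by
`φ x`. Monotonicity of `h` (antitonicity, for convex `φ`) turns this into `D (γ_A) ≤ H (p(A,ρ))`,
and likewise for `B`. -/

lemma ConcaveOn.map_add_map_le_of_add_eq {s : Set ℝ} {φ : ℝ → ℝ} (hφ : ConcaveOn ℝ s φ)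
    {a b u v : ℝ} (ha : a ∈ s) (hb : b ∈ s) (hau : a ≤ u) (hub : u ≤ b) (huv : u + v = a + b) :
    φ a + φ b ≤ φ u + φ v := by
  rcases hau.trans hub |>.eq_or_lt with rfl | hab
  · obtain rfl : u = a := le_antisymm hub hau
    obtain rfl : v = u := by linarith
    rfl
  set t := (u - a) / (b - a)
  have ht : t * (b - a) = u - a := div_mul_cancel₀ _ (sub_ne_zero.mpr hab.ne')
  have ht0 : 0 ≤ t := div_nonneg (by linarith) (by linarith)
  have ht1 : t ≤ 1 := (div_le_one (by linarith)).mpr (by linarith)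
  have hu := hφ.2 ha hb (sub_nonneg.mpr ht1) ht0 (by ring)
  have hv := hφ.2 ha hb ht0 (sub_nonneg.mpr ht1) (by ring)
  simp only [smul_eq_mul] at hu hv
  rw [show (1 - t) * a + t * b = u by linear_combination ht] at hu
  rw [show t * a + (1 - t) * b = v by linear_combination -ht - huv] at hv
  linarith

def greedySum (φ : ℝ → ℝ) (P s : ℝ) : ℝ :=
  ⌊s / P⌋₊ * φ P + φ (s - ⌊s / P⌋₊ * P)

lemma greedySum_add_le {φ : ℝ → ℝ} (hφ : ConcaveOn ℝ (Set.Icc 0 1) φ) (hφ0 : φ 0 = 0)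
    {P s x : ℝ} (hP : 0 < P) (hP1 : P ≤ 1) (hs : 0 ≤ s) (hx : 0 ≤ x) (hxP : x ≤ P) :
    greedySum φ P (s + x) ≤ greedySum φ P s + φ x := by
  set m := ⌊s / P⌋₊
  have hmP : m * P ≤ s := (le_div_iff₀ hP).mp (Nat.floor_le (div_nonneg hs hP.le))
  have hsm : s < (m + 1) * P := (div_lt_iff₀ hP).mp (Nat.lt_floor_add_one _)
  unfold greedySum
  by_cases hcarry : s + x < (m + 1) * P
  · have hfloor : ⌊(s + x) / P⌋₊ = m := by
      rw [Nat.floor_eq_iff (by positivity), le_div_iff₀ hP, div_lt_iff₀ hP]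
      constructor <;> linarith
    -- subadditivity of a concave function vanishing at `0`
    have := hφ.map_add_map_le_of_add_eq (a := 0) (b := s + x - m * P) (u := s - m * P) (v := x)
      ⟨le_rfl, zero_le_one⟩ ⟨by linarith, by linarith⟩ (by linarith) (by linarith) (by ring)
    rw [hφ0] at this
    rw [hfloor]
    linarith
  · have hfloor : ⌊(s + x) / P⌋₊ = m + 1 := by
      rw [Nat.floor_eq_iff (by positivity), le_div_iff₀ hP, div_lt_iff₀ hP]
      push_cast
      constructor <;> linarith
    have := hφ.map_add_map_le_of_add_eq (a := s + x - (m + 1) * P) (b := P) (u := s - m * P)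
      (v := x) ⟨by linarith, by linarith⟩ ⟨hP.le, hP1⟩ (by linarith) (by linarith) (by ring)
    rw [hfloor]
    push_cast
    linarith

lemma greedySum_sum_le {φ : ℝ → ℝ} (hφ : ConcaveOn ℝ (Set.Icc 0 1) φ) (hφ0 : φ 0 = 0)
    {ι : Type*} {P : ℝ} (hP : 0 < P) (hP1 : P ≤ 1) {p : ι → ℝ} (hp0 : ∀ k, 0 ≤ p k)
    (hpP : ∀ k, p k ≤ P) (s : Finset ι) :
    greedySum φ P (∑ k ∈ s, p k) ≤ ∑ k ∈ s, φ (p k) := by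
  classical
  induction s using Finset.induction_on with
  | empty => simp [greedySum, hφ0]
  | insert a s ha ih =>
    rw [Finset.sum_insert ha, Finset.sum_insert ha, add_comm (p a)]
    have hs0 : 0 ≤ ∑ k ∈ s, p k := Finset.sum_nonneg fun k _ => hp0 k
    linarith [greedySum_add_le hφ hφ0 hP hP1 hs0 (hp0 a) (hpP a)]

lemma EntropicPair.Hmin_le_H (e : EntropicPair) {ι : Type*} [Fintype ι] {p : ι → ℝ}
    (hp : IsProbVec p) {P : ℝ} (hP1 : P ≤ 1) (hpP : ∀ k, p k ≤ P) :
    e.Hmin P ≤ e.H p := by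
  have hP : 0 < P := by
    by_contra! hP
    have : ∑ k, p k ≤ 0 := Finset.sum_nonpos fun k _ => (hpP k).trans hP
    linarith [hp.2]
  have key {ψ : ℝ → ℝ} (hψ : ConcaveOn ℝ (Set.Icc 0 1) ψ) (hψ0 : ψ 0 = 0) :
      greedySum ψ P 1 ≤ ∑ k, ψ (p k) :=
    hp.2 ▸ greedySum_sum_le hψ hψ0 hP hP1 hp.1 hpP Finset.univ
  rcases e.admissible with ⟨hconc, hmono⟩ | ⟨hconv, hanti⟩
  · exact hmono.monotone (key hconc.concaveOn e.phi_zero)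
  · have := key hconv.convexOn.neg (by simp [e.phi_zero])
    simp only [greedySum, Pi.neg_apply, Finset.sum_neg_distrib] at this
    exact hanti.antitone (by linarith)

section POVM

open scoped MatrixOrder Matrix.Norms.L2Operator

variable {n : Type*} [Fintype n] [DecidableEq n]

lemma Matrix.trace_mul_nonneg {X Y : Matrix n n ℂ} (hX : 0 ≤ X) (hY : 0 ≤ Y) :
    0 ≤ (X * Y).trace := by
  obtain ⟨S, rfl⟩ := CStarAlgebra.nonneg_iff_eq_star_mul_self.mp hX
  rw [mul_assoc, Matrix.trace_mul_comm, mul_assoc, ← mul_assoc]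
  exact (Matrix.nonneg_iff_posSemidef.mp (star_right_conjugate_nonneg hY S)).trace_nonneg

lemma Matrix.trace_mul_le_trace_mul {X Y ρ : Matrix n n ℂ} (hXY : X ≤ Y) (hρ : 0 ≤ ρ) :
    (X * ρ).trace ≤ (Y * ρ).trace := by
  have := Matrix.trace_mul_nonneg (sub_nonneg.mpr hXY) hρ
  rwa [Matrix.sub_mul, Matrix.trace_sub, sub_nonneg] at this

lemma Matrix.trace_mul_le_norm_mul_trace {X ρ : Matrix n n ℂ} (hX : IsSelfAdjoint X)
    (hρ : 0 ≤ ρ) : (X * ρ).trace ≤ ‖X‖ * ρ.trace := by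
  simpa [Algebra.algebraMap_eq_smul_one] using
    Matrix.trace_mul_le_trace_mul hX.le_algebraMap_norm_self hρ

variable {N M : ℕ}

lemma opNorm_eq_norm (X : Matrix (Fin N) (Fin N) ℂ) : opNorm X = ‖X‖ := rfl

lemma psdSqrt_eq_sqrt {X : Matrix (Fin N) (Fin N) ℂ} (hX : X.PosSemidef) :
    psdSqrt X = CFC.sqrt X := by
  rw [CFC.sqrt_eq_real_sqrt X hX.nonneg, cfcₙ_eq_cfc, hX.1.cfc_eq, psdSqrt, dif_pos hX]
  rfl

lemma opNorm_psdSqrt_sq {X : Matrix (Fin N) (Fin N) ℂ} (hX : X.PosSemidef) :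
    opNorm (psdSqrt X) ^ 2 = opNorm X := by
  rw [opNorm_eq_norm, psdSqrt_eq_sqrt hX, CFC.norm_sqrt X hX.nonneg,
    Real.sq_sqrt (norm_nonneg _), opNorm_eq_norm]

namespace IsPOVM

variable {A : Fin M → Matrix (Fin N) (Fin N) ℂ}

lemma le_one (hA : IsPOVM A) (i : Fin M) : A i ≤ 1 :=
  hA.2 ▸ Finset.single_le_sum (fun j _ => (hA.1 j).nonneg) (Finset.mem_univ i)

lemma opNorm_psdSqrt_le_one (hA : IsPOVM A) (i : Fin M) : opNorm (psdSqrt (A i)) ≤ 1 := by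
  have hAi : opNorm (A i) ≤ 1 :=
    (CStarAlgebra.norm_le_one_iff_of_nonneg (A i) (hA.1 i).nonneg).mpr (hA.le_one i)
  rw [← opNorm_psdSqrt_sq (hA.1 i)] at hAi
  exact (pow_le_one_iff_of_nonneg (norm_nonneg _) two_ne_zero).mp hAi

lemma opNorm_psdSqrt_le_covA (hA : IsPOVM A) (i : Fin M) : opNorm (psdSqrt (A i)) ≤ covA A :=
  le_ciSup ⟨1, Set.forall_mem_range.mpr hA.opNorm_psdSqrt_le_one⟩ i

lemma covA_nonneg (hM : 0 < M) (hA : IsPOVM A) : 0 ≤ covA A :=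
  (norm_nonneg _).trans (hA.opNorm_psdSqrt_le_covA ⟨0, hM⟩)

lemma covA_le_one (hM : 0 < M) (hA : IsPOVM A) : covA A ≤ 1 :=
  have : Nonempty (Fin M) := ⟨⟨0, hM⟩⟩
  ciSup_le hA.opNorm_psdSqrt_le_one

lemma isProbVec_probVec (hA : IsPOVM A) {ρ : Matrix (Fin N) (Fin N) ℂ} (hρ : IsDensityOp ρ) :
    IsProbVec (probVec A ρ) := by
  refine ⟨fun i => (Complex.nonneg_iff.mp (Matrix.trace_mul_nonneg (hA.1 i).nonneg
    hρ.1.nonneg)).1, ?_⟩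
  change ∑ i, ((A i * ρ).trace).re = 1
  rw [← Complex.re_sum, ← Matrix.trace_sum, ← Finset.sum_mul, hA.2, one_mul, hρ.2,
    Complex.one_re]

lemma probVec_le_covA_sq (hA : IsPOVM A) {ρ : Matrix (Fin N) (Fin N) ℂ} (hρ : IsDensityOp ρ)
    (i : Fin M) : probVec A ρ i ≤ covA A ^ 2 := by
  have hp : ((A i * ρ).trace).re ≤ opNorm (A i) := by
    rw [opNorm_eq_norm]
    simpa [hρ.2] using Complex.re_le_re
      (Matrix.trace_mul_le_norm_mul_trace (hA.1 i).isHermitian hρ.1.nonneg)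
  rw [← opNorm_psdSqrt_sq (hA.1 i)] at hp
  exact hp.trans (pow_le_pow_left₀ (norm_nonneg _) (hA.opNorm_psdSqrt_le_covA i) 2)

end IsPOVM

end POVM

lemma EntropicPair.D_arccos_le_H (e : EntropicPair) {N M : ℕ} (hM : 0 < M)
    {A : Fin M → Matrix (Fin N) (Fin N) ℂ} (hA : IsPOVM A) {ρ : Matrix (Fin N) (Fin N) ℂ}
    (hρ : IsDensityOp ρ) : e.D (Real.arccos (covA A)) ≤ e.H (probVec A ρ) := by
  have hc0 := hA.covA_nonneg hM
  have hc1 := hA.covA_le_one hM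
  rw [EntropicPair.D, Real.cos_arccos (by linarith) hc1]
  exact e.Hmin_le_H (hA.isProbVec_probVec hρ) (pow_le_one₀ hc0 hc1) (hA.probVec_le_covA_sq hρ)

/-- Explicit (generally weaker) lower bound
`D_{(h_A,φ_A)}(γ_A) + D_{(h_B,φ_B)}(γ_B)` for the entropy sum, valid for any overlap triplet. -/
theorem general_entropic_uncertainty_relation_weak
    {N NA NB : ℕ} (hNA : 0 < NA) (hNB : 0 < NB)
    (A : Fin NA → Matrix (Fin N) (Fin N) ℂ) (B : Fin NB → Matrix (Fin N) (Fin N) ℂ)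
    (hA : IsPOVM A) (hB : IsPOVM B)
    (ρ : Matrix (Fin N) (Fin N) ℂ) (hρ : IsDensityOp ρ)
    (eA eB : EntropicPair)
    (γA γB : ℝ)
    (hγA : γA = Real.arccos (covA A)) (hγB : γB = Real.arccos (covA B)) :
    eA.H (probVec A ρ) + eB.H (probVec B ρ) ≥ eA.D γA + eB.D γB := by
  subst hγA hγB
  exact add_le_add (eA.D_arccos_le_H hNA hA hρ) (eB.D_arccos_le_H hNB hB hρ)

end
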